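/- arXiv:1502.07934 — 3 statements merged into one kernel-verified Lean document; each statement's English description precedes it below -/
import Mathlib

section
/- Let a ≥ 1 be an integer and c = (c_0, …, c_{a−1}) ∈ ℤ^a with c_0 + ⋯ + c_{a−1} = 0. Then the size of the a-core core_a(c) is given by the quadratic function |core_a(c)| = (a/2)·Σ_{k=0}^{a−1} c_k² + Σ_{k=0}^{a−1} k·c_k. -/
/-- A partition, encoded by its weakly decreasing, eventually zero sequence of parts;
`parts j` is the `(j+1)`-st part `λ_{j+1}`. -/
structure PartitionSeq where
  parts : ℕ → ℕ
  antitone : ∀ ⦃i j : ℕ⦄, i ≤ j → parts j ≤ parts i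
  eventually_zero : ∃ N, parts N = 0

namespace PartitionSeq

/-- The beta-set `{λ_j − j : j ≥ 1}` of a partition (with trailing zero parts included). -/
def betaSet (lam : PartitionSeq) : Set ℤ :=
  Set.range fun j : ℕ => (lam.parts j : ℤ) - (j + 1)

/-- The hook length of the cell in row `i`, column `j` (both 0-indexed): one plus the
number of cells to its right in its row plus the number of cells below it in its column. -/
noncomputable def hook (lam : PartitionSeq) (i j : ℕ) : ℕ :=
  (lam.parts i - j) + Set.ncard {i' : ℕ | i < i' ∧ j < lam.parts i'}

/-- `lam` is an `a`-core: no cell of its Young diagram has hook length `a`. -/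
def IsCore (lam : PartitionSeq) (a : ℕ) : Prop :=
  ∀ i j : ℕ, j < lam.parts i → lam.hook i j ≠ a

/-- The size `|λ| = λ₁ + λ₂ + ⋯` of a partition. -/
noncomputable def size (lam : PartitionSeq) : ℕ := ∑ᶠ j, lam.parts j

/-- The length (number of nonzero parts) of a partition. -/
noncomputable def length (lam : PartitionSeq) : ℕ := Set.ncard {j | 0 < lam.parts j}

/-- The `(j+1)`-st part of the conjugate (transpose) partition. -/
noncomputable def conjParts (lam : PartitionSeq) (j : ℕ) : ℕ :=
  Set.ncard {i | j < lam.parts i}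

/-- A partition is self-conjugate if it equals its conjugate. -/
def SelfConjugate (lam : PartitionSeq) : Prop := ∀ j, lam.parts j = lam.conjParts j

end PartitionSeq

/-- The set `B_a(c) = { −a(c_i + n) − i − 1 : 0 ≤ i ≤ a−1, n ∈ ℕ } ⊆ ℤ`. -/
def Bset (a : ℕ) (c : Fin a → ℤ) : Set ℤ :=
  {x | ∃ (i : Fin a) (n : ℕ), x = -(a : ℤ) * (c i + n) - i.val - 1}

/-
The beta-set enumerates as the strictly decreasing sequence `β_j = λ_{j+1} - (j+1)`, which
agrees with `-(j+1)` once the parts vanish. Cutting both descriptions of the beta-set at `-N`,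
for `N = aK` large, gives the same finite set: `{β_j : j < N}` on one side and
`{-am - i - 1 : c_i ≤ m < K}` on the other. Summing it both ways, the left side is
`|λ| - N(N+1)/2` and the right side is a sum of arithmetic progressions whose `K`-dependence
cancels against `N(N+1)/2` because `Σ c_i = 0`.
-/

open Finset

lemma sum_range_add_one_cast (N : ℕ) : ∑ j ∈ range N, ((j : ℚ) + 1) = N * (N + 1) / 2 := by
  induction N with
  | zero => simp
  | succ N ih => rw [sum_range_succ, ih]; push_cast; ring

lemma sum_Ico_intCast {c K : ℤ} (hcK : c ≤ K) :
    ∑ m ∈ Ico c K, (m : ℚ) = (K * (K - 1) - c * (c - 1)) / 2 := by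
  induction K, hcK using Int.leInduction with
  | base => simp
  | succ K hcK ih =>
    rw [← insert_Ico_right_eq_Ico_add_one hcK, sum_insert (by simp), ih]
    push_cast; ring

namespace PartitionSeq

variable (lam : PartitionSeq) {N : ℕ}

def beta (j : ℕ) : ℤ := lam.parts j - (j + 1)

lemma betaSet_eq_range_beta : lam.betaSet = Set.range lam.beta := rfl

lemma beta_strictAnti : StrictAnti lam.beta := by
  intro i j hij
  have := lam.antitone hij.le
  simp only [beta]
  omega

variable {lam}

lemma parts_eq_zero_of_le {j : ℕ} (hN : lam.parts N = 0) (hj : N ≤ j) : lam.parts j = 0 := by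
  have := lam.antitone hj
  omega

lemma neg_le_beta_iff (hN : lam.parts N = 0) {j : ℕ} : -(N : ℤ) ≤ lam.beta j ↔ j < N := by
  constructor
  · intro h
    by_contra hj
    have := parts_eq_zero_of_le hN (not_lt.1 hj)
    simp only [beta] at h
    omega
  · intro hj
    simp only [beta]
    omega

lemma mem_image_beta_range_iff (hN : lam.parts N = 0) {x : ℤ} :
    x ∈ (range N).image lam.beta ↔ x ∈ lam.betaSet ∧ -(N : ℤ) ≤ x := by
  simp only [mem_image, mem_range, betaSet_eq_range_beta, Set.mem_range]
  constructor
  · rintro ⟨j, hj, rfl⟩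
    exact ⟨⟨j, rfl⟩, (neg_le_beta_iff hN).2 hj⟩
  · rintro ⟨⟨j, rfl⟩, h⟩
    exact ⟨j, (neg_le_beta_iff hN).1 h, rfl⟩

lemma size_eq_sum_range (hN : lam.parts N = 0) : lam.size = ∑ j ∈ range N, lam.parts j := by
  refine finsum_eq_sum_of_support_subset _ fun j hj => ?_
  by_contra hjN
  exact hj (parts_eq_zero_of_le hN (by simpa using hjN))

lemma size_eq_sum_image_beta (hN : lam.parts N = 0) :
    (lam.size : ℚ) = ∑ x ∈ (range N).image lam.beta, (x : ℚ) + N * (N + 1) / 2 := by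
  have hparts : ∀ j, (lam.parts j : ℚ) = lam.beta j + ((j : ℚ) + 1) := by
    intro j
    simp only [beta]
    push_cast
    ring
  rw [size_eq_sum_range hN, sum_image lam.beta_strictAnti.injective.injOn, Nat.cast_sum,
    ← sum_range_add_one_cast, ← sum_add_distrib]
  exact sum_congr rfl fun j _ => hparts j

end PartitionSeq

section Bset

variable {a : ℕ}

/-- The point `-a m - i - 1` of `B_a(c)`, with `m = c_i + n`. -/
def bsetPoint (a : ℕ) (p : (_ : Fin a) × ℤ) : ℤ := -(a : ℤ) * p.2 - p.1 - 1

lemma bsetPoint_injective : Function.Injective (bsetPoint a) := by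
  rintro ⟨i, m⟩ ⟨j, m'⟩ h
  simp only [bsetPoint] at h
  have hij : (i : ℤ) = j := by
    have hi : (i : ℤ) < a := by exact_mod_cast i.isLt
    have hj : (j : ℤ) < a := by exact_mod_cast j.isLt
    have := Int.eq_zero_of_abs_lt_dvd ⟨m' - m, by linarith⟩ (abs_sub_lt_of_nonneg_of_lt
      (Nat.cast_nonneg _) hi (Nat.cast_nonneg _) hj)
    linarith
  have hi : i = j := Fin.ext (by exact_mod_cast hij)
  subst hi
  have hm : m = m' := by
    have ha : (a : ℤ) ≠ 0 := by have := i.pos; omega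
    exact mul_left_cancel₀ (neg_ne_zero.2 ha) (by linarith)
  rw [hm]

lemma neg_mul_le_bsetPoint_iff (K : ℤ) (p : (_ : Fin a) × ℤ) :
    -(a * K) ≤ bsetPoint a p ↔ p.2 < K := by
  obtain ⟨i, m⟩ := p
  have hi : (i : ℤ) < a := by exact_mod_cast i.isLt
  simp only [bsetPoint]
  constructor
  · intro h
    by_contra hm
    nlinarith [show (0 : ℤ) ≤ i from Nat.cast_nonneg _]
  · intro hm
    nlinarith [show (0 : ℤ) ≤ i from Nat.cast_nonneg _]

lemma mem_image_bsetPoint_iff {c : Fin a → ℤ} (K : ℤ) {x : ℤ} :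
    x ∈ (univ.sigma fun i => Ico (c i) K).image (bsetPoint a) ↔
      x ∈ Bset a c ∧ -(a * K) ≤ x := by
  constructor
  · intro hx
    obtain ⟨⟨i, m⟩, hp, rfl⟩ := mem_image.1 hx
    simp only [mem_sigma, mem_univ, mem_Ico, true_and] at hp
    refine ⟨⟨i, (m - c i).toNat, ?_⟩, (neg_mul_le_bsetPoint_iff K _).2 hp.2⟩
    simp only [bsetPoint]
    rw [Int.toNat_of_nonneg (by omega)]
    ring
  · rintro ⟨⟨i, n, rfl⟩, hx⟩
    refine mem_image.2 ⟨⟨i, c i + n⟩, ?_, by simp only [bsetPoint]⟩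
    simp only [mem_sigma, mem_univ, mem_Ico, true_and]
    refine ⟨by omega, (neg_mul_le_bsetPoint_iff K ⟨i, c i + n⟩).1 ?_⟩
    simpa [bsetPoint] using hx

lemma sum_image_bsetPoint {c : Fin a → ℤ} (hc : ∑ i, c i = 0) {K : ℤ}
    (hK : ∀ i, c i ≤ K) :
    ∑ x ∈ (univ.sigma fun i => Ico (c i) K).image (bsetPoint a), (x : ℚ) =
      (a : ℚ) / 2 * ∑ i, (c i : ℚ) ^ 2 + ∑ i : Fin a, (i.val : ℚ) * (c i : ℚ)
        - (a * K) * (a * K + 1) / 2 := by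
  have hrow : ∀ i : Fin a, ∑ m ∈ Ico (c i) K, (bsetPoint a ⟨i, m⟩ : ℚ) =
      (a : ℚ) / 2 * (c i : ℚ) ^ 2 + (i.val : ℚ) * c i + (1 - (a : ℚ) / 2) * c i
        - K * ((i.val : ℚ) + 1) - a * K * (K - 1) / 2 := by
    intro i
    have hcard : ((Ico (c i) K).card : ℚ) = K - c i := by
      rw [Int.card_Ico, ← Int.cast_natCast, Int.toNat_of_nonneg (by linarith [hK i]),
        Int.cast_sub]
    simp only [bsetPoint]
    push_cast
    rw [sum_sub_distrib, sum_sub_distrib, ← mul_sum, sum_Ico_intCast (hK i), sum_const,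
      sum_const, nsmul_eq_mul, nsmul_eq_mul, hcard]
    ring
  have hcQ : ∑ i, (c i : ℚ) = 0 := by exact_mod_cast hc
  have hidx : ∑ i : Fin a, ((i.val : ℚ) + 1) = a * (a + 1) / 2 := by
    rw [Fin.sum_univ_eq_sum_range (fun i => (i : ℚ) + 1), sum_range_add_one_cast]
  rw [sum_image bsetPoint_injective.injOn, sum_sigma, sum_congr rfl fun i _ => hrow i]
  simp only [sum_sub_distrib, sum_add_distrib, ← mul_sum, sum_const, card_univ, Fintype.card_fin,
    nsmul_eq_mul, hcQ, hidx]
  ring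

end Bset

theorem stmt1_general (a : ℕ) (c : Fin a → ℤ) (hc : (∑ i, c i) = 0)
    (lam : PartitionSeq) (hlam : lam.betaSet = Bset a c) :
    (lam.size : ℚ) =
      (a : ℚ) / 2 * (∑ k, (c k : ℚ) ^ 2) + ∑ k : Fin a, (k.val : ℚ) * (c k : ℚ) := by
  obtain ⟨i₀, -⟩ : lam.beta 0 ∈ Bset a c := hlam ▸ Set.mem_range_self 0
  obtain ⟨N₀, hN₀⟩ := lam.eventually_zero
  obtain ⟨M, hM⟩ := Finite.exists_le fun i => (c i).toNat
  set K := max N₀ M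
  have hK : ∀ i, c i ≤ K := fun i =>
    (Int.self_le_toNat _).trans (by exact_mod_cast (hM i).trans (le_max_right N₀ M))
  have hN : lam.parts (a * K) = 0 :=
    PartitionSeq.parts_eq_zero_of_le hN₀
      ((le_max_left N₀ M).trans (Nat.le_mul_of_pos_left K i₀.pos))
  have himage : (range (a * K)).image lam.beta =
      (univ.sigma fun i => Ico (c i) K).image (bsetPoint a) := by
    ext x
    rw [PartitionSeq.mem_image_beta_range_iff hN, mem_image_bsetPoint_iff, hlam]
    push_cast
    rfl
  rw [PartitionSeq.size_eq_sum_image_beta hN, himage, sum_image_bsetPoint hc hK]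
  push_cast
  ring

/-- the size of the `a`-core `core_a(c)` is
`(a/2)·Σ c_k² + Σ k·c_k`. -/
theorem stmt1 (a : ℕ) (ha : 1 ≤ a) (c : Fin a → ℤ) (hc : (∑ i, c i) = 0)
    (lam : PartitionSeq) (hlam : lam.betaSet = Bset a c) :
    (lam.size : ℚ) =
      (a : ℚ) / 2 * (∑ k, (c k : ℚ) ^ 2) + ∑ k : Fin a, (k.val : ℚ) * (c k : ℚ) :=
  stmt1_general a c hc lam hlam
end

section
/- Let a, b ≥ 1 be integers and c = (c_0, …, c_{a−1}) ∈ ℤ^a with c_0 + ⋯ + c_{a−1} = 0. Then the a-core core_a(c) is a b-core if and only if for every i ∈ {0, …, a−1} one has c_{(i+b) mod a} − c_i ≤ ⌊(b+i)/a⌋. -/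
/-!
Call the elements of the beta-set beads and the other integers gaps. The gaps of `λ` are the
numbers `j − λ'_{j+1}`, and the cell in row `i`, column `j` has hook length equal to the bead
`λ_{i+1} − (i+1)` minus the gap `j − λ'_{j+1}`. Hence `λ` is a `b`-core iff its beta-set is closed
under `x ↦ x − b`. On the `a`-abacus, `B_a(c)` has on runner `i` exactly the beads of level
`≥ c_i`, and moving `b` steps to the left takes runner `i` to runner `(i + b) mod a`, raising the
level by `⌊(b + i)/a⌋`; so closure means `c_{(i+b) mod a} ≤ c_i + ⌊(b + i)/a⌋` for every `i`.
-/

namespace PartitionSeq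

variable (lam : PartitionSeq)

lemma setOf_lt_parts_eq_Iio_conjParts (j : ℕ) :
    {i | j < lam.parts i} = Set.Iio (lam.conjParts j) := by
  have hex : ∃ i, lam.parts i ≤ j := by
    obtain ⟨N, hN⟩ := lam.eventually_zero
    exact ⟨N, by omega⟩
  have hIio : {i | j < lam.parts i} = Set.Iio (Nat.find hex) := by
    ext i
    simp only [Set.mem_ofPred_eq, Set.mem_Iio, Nat.lt_find_iff, not_le]
    exact ⟨fun h m hm => h.trans_le (lam.antitone hm), fun h => h i le_rfl⟩
  rw [conjParts, hIio, Set.ncard_Iio_nat]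

lemma lt_conjParts_iff {i j : ℕ} : i < lam.conjParts j ↔ j < lam.parts i := by
  rw [← Set.mem_Iio, ← setOf_lt_parts_eq_Iio_conjParts, Set.mem_ofPred_eq]

lemma sub_conjParts_notMem_betaSet (j : ℕ) : (j : ℤ) - lam.conjParts j ∉ lam.betaSet := by
  rintro ⟨i, hi⟩
  have := lam.lt_conjParts_iff (i := i) (j := j)
  simp only at hi
  omega

lemma exists_eq_sub_conjParts_of_notMem_betaSet {y : ℤ} (hy : y ∉ lam.betaSet) :
    ∃ j : ℕ, y = j - lam.conjParts j := by
  have hex : ∃ i : ℕ, (lam.parts i : ℤ) - (i + 1) ≤ y := by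
    obtain ⟨N, hN⟩ := lam.eventually_zero
    refine ⟨max N (-y).toNat, ?_⟩
    have := lam.antitone (le_max_left N (-y).toNat)
    omega
  -- `i` is the first row whose bead lies weakly left of `y`; then `y` is the gap in column `y + i`.
  set i := Nat.find hex
  have hbelow : (lam.parts i : ℤ) - (i + 1) < y :=
    (Nat.find_spec hex).lt_of_ne fun h => hy ⟨i, h⟩
  have habove : ∀ i' < i, y < (lam.parts i' : ℤ) - (i' + 1) := fun i' hi' =>
    lt_of_not_ge (Nat.find_min hex hi')
  refine ⟨(y + i).toNat, ?_⟩
  have hconj : lam.conjParts (y + i).toNat = i := by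
    refine eq_of_forall_lt_iff fun i' => ?_
    rw [lt_conjParts_iff]
    constructor
    · intro h
      by_contra! hi'
      have := lam.antitone hi'
      omega
    · intro hi'
      have := habove (i - 1) (by omega)
      have := lam.antitone (Nat.le_sub_one_of_lt hi')
      omega
  rw [hconj]
  omega

lemma notMem_betaSet_iff {y : ℤ} : y ∉ lam.betaSet ↔ ∃ j : ℕ, y = j - lam.conjParts j :=
  ⟨lam.exists_eq_sub_conjParts_of_notMem_betaSet,
    fun ⟨j, hj⟩ => hj ▸ lam.sub_conjParts_notMem_betaSet j⟩

lemma hook_eq_sub {i j : ℕ} (h : j < lam.parts i) :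
    (lam.hook i j : ℤ) = ((lam.parts i : ℤ) - (i + 1)) - ((j : ℤ) - lam.conjParts j) := by
  have hset : {i' | i < i' ∧ j < lam.parts i'} = Set.Ico (i + 1) (lam.conjParts j) := by
    ext i'
    simp only [Set.mem_ofPred_eq, Set.mem_Ico, ← lt_conjParts_iff]
    omega
  have := (lam.lt_conjParts_iff).mpr h
  rw [hook, hset, ← Finset.coe_Ico, Set.ncard_coe_finset, Nat.card_Ico]
  omega

lemma isCore_iff_sub_mem_betaSet (b : ℕ) :
    lam.IsCore b ↔ ∀ x ∈ lam.betaSet, x - b ∈ lam.betaSet := by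
  constructor
  · rintro hcore _ ⟨i, rfl⟩
    by_contra hgap
    obtain ⟨j, hj⟩ := lam.notMem_betaSet_iff.mp hgap
    dsimp only at hj
    have hcell : j < lam.parts i := by
      by_contra! hj'
      have := (lam.lt_conjParts_iff (i := i) (j := j)).not.mpr (by omega)
      omega
    have := lam.hook_eq_sub hcell
    exact hcore i j hcell (by omega)
  · intro hclosed i j hcell hhook
    have := lam.hook_eq_sub hcell
    refine lam.notMem_betaSet_iff.mpr ⟨j, ?_⟩ (hclosed _ ⟨i, rfl⟩)
    dsimp only
    omega

end PartitionSeq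

section Bset

variable {a : ℕ} (c : Fin a → ℤ)

lemma neg_mul_sub_sub_one_mem_Bset_iff (i : Fin a) (m : ℤ) :
    -(a : ℤ) * m - i.val - 1 ∈ Bset a c ↔ c i ≤ m := by
  constructor
  · rintro ⟨j, n, hj⟩
    have hdiff : (i.val : ℤ) - j.val = a * (c j + n - m) := by linear_combination -hj
    have hij : i = j := by
      refine Fin.ext (Int.ofNat_inj.mp (sub_eq_zero.mp (Int.eq_zero_of_abs_lt_dvd ⟨_, hdiff⟩ ?_)))
      rw [abs_lt]
      omega
    subst hij
    nlinarith [Int.natCast_pos.mpr (i.pos)]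
  · intro h
    exact ⟨i, (m - c i).toNat, by rw [Int.toNat_of_nonneg (sub_nonneg.mpr h)]; ring⟩

lemma neg_mul_sub_sub_one_sub_mem_Bset_iff (ha : 0 < a) (b : ℕ) (i : Fin a) (m : ℤ) :
    -(a : ℤ) * m - i.val - 1 - b ∈ Bset a c ↔
      c ⟨(i.val + b) % a, Nat.mod_lt _ ha⟩ ≤ m + (((b + i.val) / a : ℕ) : ℤ) := by
  have hdivmod : (a : ℤ) * ((b + i.val) / a : ℕ) + ((i.val + b) % a : ℕ) = i.val + b := by
    rw [Nat.add_comm b]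
    exact_mod_cast Nat.div_add_mod (i.val + b) a
  rw [← neg_mul_sub_sub_one_mem_Bset_iff]
  convert Iff.rfl using 2
  linear_combination -hdivmod

lemma forall_mem_Bset_sub_mem_iff (ha : 0 < a) (b : ℕ) :
    (∀ x ∈ Bset a c, x - b ∈ Bset a c) ↔
      ∀ i : Fin a, c ⟨(i.val + b) % a, Nat.mod_lt _ ha⟩ - c i ≤ (((b + i.val) / a : ℕ) : ℤ) := by
  simp only [sub_le_iff_le_add']
  constructor
  · intro hclosed i
    rw [← neg_mul_sub_sub_one_sub_mem_Bset_iff c ha]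
    exact hclosed _ ((neg_mul_sub_sub_one_mem_Bset_iff c i _).mpr le_rfl)
  · rintro hstep _ ⟨i, n, rfl⟩
    rw [neg_mul_sub_sub_one_sub_mem_Bset_iff c ha]
    have := hstep i
    omega

end Bset

theorem stmt2_general (a b : ℕ) (ha : 1 ≤ a) (c : Fin a → ℤ)
    (lam : PartitionSeq) (hlam : lam.betaSet = Bset a c) :
    lam.IsCore b ↔
      ∀ i : Fin a, c ⟨(i.val + b) % a, Nat.mod_lt _ ha⟩ - c i ≤ (((b + i.val) / a : ℕ) : ℤ) := by
  rw [lam.isCore_iff_sub_mem_betaSet, hlam]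
  exact forall_mem_Bset_sub_mem_iff c ha b

/-- `core_a(c)` is a `b`-core iff `c_{(i+b) mod a} − c_i ≤ ⌊(b+i)/a⌋` for all `i`. -/
theorem stmt2 (a b : ℕ) (ha : 1 ≤ a) (hb : 1 ≤ b) (c : Fin a → ℤ) (hc : (∑ i, c i) = 0)
    (lam : PartitionSeq) (hlam : lam.betaSet = Bset a c) :
    lam.IsCore b ↔
      ∀ i : Fin a, c ⟨(i.val + b) % a, Nat.mod_lt _ ha⟩ - c i ≤ (((b + i.val) / a : ℕ) : ℤ) :=
  stmt2_general a b ha c lam hlam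
end

section
/- Let a ≥ 1 be an integer and c = (c_0, …, c_{a−1}) ∈ ℤ^a with c_0 + ⋯ + c_{a−1} = 0. Define T(c) ∈ ℤ^a by T(c)_i = −c_{a−1−i}. Then the conjugate (transpose) partition of core_a(c) equals core_a(T(c)). -/
/-! Reading the boundary of a Young diagram as a sequence of unit steps shows that the beta-set of
the conjugate `λ'` is the complement of the reflection `x ↦ -1 - x` of the beta-set of `λ`.
On the other side, `B_a(c)` is described residue class by residue class: `-a m - i - 1 ∈ B_a(c)`
iff `c_i ≤ m`, so the same reflection carries the complement of `B_a(c)` onto `B_a(T(c))`.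
A partition being determined by its beta-set, `core_a(c)' = core_a(T(c))`. -/

namespace PartitionSeq

variable (lam : PartitionSeq)

theorem conjParts_eq_of_forall_iff {j k : ℕ} (h : ∀ i, j < lam.parts i ↔ i < k) :
    lam.conjParts j = k := by
  rw [conjParts, show {i | j < lam.parts i} = Set.Iio k from Set.ext h, ← Finset.coe_range,
    Set.ncard_coe_finset, Finset.card_range]

theorem lt_parts_iff_lt_conjParts (i j : ℕ) : j < lam.parts i ↔ i < lam.conjParts j := by
  have hex : ∃ k, lam.parts k ≤ j := by
    obtain ⟨N, hN⟩ := lam.eventually_zero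
    exact ⟨N, hN ▸ j.zero_le⟩
  suffices h : ∀ i, j < lam.parts i ↔ i < Nat.find hex by
    rw [lam.conjParts_eq_of_forall_iff h, h]
  intro i
  refine ⟨fun hi => ?_, fun hi => not_le.mp (Nat.find_min hex hi)⟩
  by_contra hk
  have := lam.antitone (not_lt.mp hk)
  have := Nat.find_spec hex
  omega

theorem conjParts_antitone : ∀ ⦃i j : ℕ⦄, i ≤ j → lam.conjParts j ≤ lam.conjParts i := by
  intro i j hij
  by_contra! h
  have := (lam.lt_parts_iff_lt_conjParts _ j).mpr h
  have := (lam.lt_parts_iff_lt_conjParts (lam.conjParts i) i).mp (by omega)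
  omega

theorem conjParts_parts_zero : lam.conjParts (lam.parts 0) = 0 := by
  by_contra! h
  have := (lam.lt_parts_iff_lt_conjParts 0 _).mpr (Nat.pos_of_ne_zero h)
  omega

noncomputable def conj : PartitionSeq where
  parts := lam.conjParts
  antitone := lam.conjParts_antitone
  eventually_zero := ⟨lam.parts 0, lam.conjParts_parts_zero⟩

theorem strictAnti_parts_sub_succ : StrictAnti fun j : ℕ => (lam.parts j : ℤ) - (j + 1) :=
  strictAnti_nat_of_succ_lt fun j => by
    have := lam.antitone (Nat.le_add_right j 1)
    push_cast
    omega

theorem parts_eq_of_betaSet_eq {lam mu : PartitionSeq} (h : lam.betaSet = mu.betaSet) :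
    lam.parts = mu.parts := by
  have hseq := Set.range_injOn_strictMono (β := ℕ) (γ := ℤᵒᵈ)
    lam.strictAnti_parts_sub_succ.dual_right mu.strictAnti_parts_sub_succ.dual_right h
  funext j
  have : (lam.parts j : ℤ) - (j + 1) = mu.parts j - (j + 1) := congrFun hseq j
  omega

theorem mem_betaSet_conj_iff (y : ℤ) : y ∈ lam.conj.betaSet ↔ -1 - y ∉ lam.betaSet := by
  simp only [betaSet, Set.mem_range, not_exists]
  constructor
  · rintro ⟨j, rfl⟩ i hi
    have := lam.lt_parts_iff_lt_conjParts i j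
    change _ = -1 - ((lam.conjParts j : ℤ) - (j + 1)) at hi
    omega
  · intro hy
    have hex : ∃ k : ℕ, y < (k : ℤ) - lam.parts k := by
      refine ⟨(y + 1 + lam.parts 0).toNat, ?_⟩
      have := lam.antitone (Nat.zero_le (y + 1 + lam.parts 0).toNat)
      omega
    -- `k` is the first row with `k - λ_k > y`; column `k - 1 - y` of `λ` then has exactly `k` cells.
    set k := Nat.find hex
    have hk : y < (k : ℤ) - lam.parts k := Nat.find_spec hex
    have hj : lam.conjParts (k - 1 - y).toNat = k := by
      refine lam.conjParts_eq_of_forall_iff fun i => ⟨fun hi => ?_, fun hi => ?_⟩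
      · by_contra! hki
        have := lam.antitone hki
        omega
      · have hmin : ¬ y < ((k - 1 : ℕ) : ℤ) - lam.parts (k - 1) := Nat.find_min hex (by omega)
        have := hy (k - 1)
        have := lam.antitone (show i ≤ k - 1 by omega)
        omega
    exact ⟨(k - 1 - y).toNat, by change (lam.conjParts _ : ℤ) - _ = _; omega⟩

end PartitionSeq

theorem mem_Bset_iff {a : ℕ} (c : Fin a → ℤ) (i : Fin a) (m : ℤ) :
    -(a : ℤ) * m - i - 1 ∈ Bset a c ↔ c i ≤ m := by
  constructor
  · rintro ⟨i', n, h⟩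
    have ha : (a : ℤ) ≠ 0 := by have := i.pos; omega
    have hmod (k : Fin a) (q : ℤ) : ((k : ℤ) + a * q) % a = k := by
      rw [Int.add_mul_emod_self_left, Int.emod_eq_of_lt (by omega) (by omega)]
    have hi : (i : ℤ) = i' := by
      rw [← hmod i m, ← hmod i' (c i' + n)]
      congr 1
      linarith
    have hm : m = c i' + n := mul_left_cancel₀ ha (by linarith)
    obtain rfl : i = i' := Fin.ext (by exact_mod_cast hi)
    omega
  · intro h
    exact ⟨i, (m - c i).toNat, by rw [Int.toNat_of_nonneg (by omega)]; ring⟩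

theorem mem_Bset_neg_rev_iff {a : ℕ} (ha : 1 ≤ a) (c : Fin a → ℤ) (y : ℤ) :
    y ∈ Bset a (fun i => -c i.rev) ↔ -1 - y ∉ Bset a c := by
  obtain ⟨M, r, hr0, hra, rfl⟩ : ∃ M r : ℤ, 0 ≤ r ∧ r < a ∧ y = a * M + r :=
    ⟨y / a, y % a, Int.emod_nonneg _ (by omega), Int.emod_lt_of_pos _ (by omega),
      (Int.mul_ediv_add_emod y a).symm⟩
  let i : Fin a := ⟨r.toNat, by omega⟩
  have hc : -1 - (a * M + r) = -(a : ℤ) * M - i - 1 := by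
    simp only [i, Int.toNat_of_nonneg hr0]
    ring
  have hT : a * M + r = -(a : ℤ) * (-M - 1) - i.rev - 1 := by
    simp only [Fin.val_rev, i]
    push_cast [Nat.cast_sub (show r.toNat + 1 ≤ a by omega), Int.toNat_of_nonneg hr0]
    ring
  rw [hc, mem_Bset_iff, hT, mem_Bset_iff, Fin.rev_rev]
  omega

theorem stmt8_general (a : ℕ) (ha : 1 ≤ a) (c : Fin a → ℤ)
    (lam mu : PartitionSeq) (hlam : lam.betaSet = Bset a c)
    (hmu : mu.betaSet = Bset a (fun i : Fin a => -c i.rev)) :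
    ∀ j, mu.parts j = lam.conjParts j := by
  have h : mu.betaSet = lam.conj.betaSet := by
    ext y
    rw [hmu, lam.mem_betaSet_conj_iff, hlam]
    exact mem_Bset_neg_rev_iff ha c y
  exact congrFun (PartitionSeq.parts_eq_of_betaSet_eq h)

/-- with `T(c)_i = −c_{a−1−i}`, the conjugate of `core_a(c)` is `core_a(T(c))`. -/
theorem stmt8 (a : ℕ) (ha : 1 ≤ a) (c : Fin a → ℤ) (hc : (∑ i, c i) = 0)
    (lam mu : PartitionSeq) (hlam : lam.betaSet = Bset a c)
    (hmu : mu.betaSet = Bset a (fun i : Fin a => -c i.rev)) :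
    ∀ j, mu.parts j = lam.conjParts j :=
  stmt8_general a ha c lam mu hlam hmu
end
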